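/- arXiv:1905.03547 — 9 statements merged into one kernel-verified Lean document; each statement's English description precedes it below -/
import Mathlib

section
/- For every integer m ≥ 1, the real cube root of N = m³ + m(2m+1) satisfies N^(1/3) < m + (2m+1)/(3m+2). -/
/-! Writing `b = m + (2m+1)/(3m+2) = (m+1)(3m+1)/(3m+2)` and `N = m(m+1)²`, the claim
`N < b³` reduces to the polynomial identity `(m+1)(3m+1)³ - m(3m+2)³ = 2m+1`. -/

lemma Real.rpow_one_div_three_lt_of_lt_pow_three {x y : ℝ} (hx : 0 ≤ x) (hy : 0 ≤ y)
    (h : x < y ^ 3) : x ^ ((1 : ℝ) / 3) < y := by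
  rw [one_div, Real.rpow_inv_lt_iff_of_pos hx hy three_pos]
  exact_mod_cast h

lemma heron_cube_lt (m : ℝ) (hm : 0 ≤ m) :
    m ^ 3 + m * (2 * m + 1) < (m + (2 * m + 1) / (3 * m + 2)) ^ 3 := by
  have hd : 0 < 3 * m + 2 := by linarith
  have hb : m + (2 * m + 1) / (3 * m + 2) = (m + 1) * (3 * m + 1) / (3 * m + 2) := by
    field_simp
    ring
  have hgap : 0 < (m + 1) ^ 2 * (2 * m + 1) := by positivity
  rw [hb, div_pow, lt_div_iff₀ (by positivity)]
  linear_combination hgap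

theorem heron_bound_family_general (m : ℕ) :
    ((m^3 + m*(2*m+1) : ℝ)) ^ ((1:ℝ)/3) < m + (2*m+1)/(3*m+2) :=
  Real.rpow_one_div_three_lt_of_lt_pow_three (by positivity) (by positivity)
    (heron_cube_lt m m.cast_nonneg)

theorem heron_bound_family (m : ℕ) (hm : 1 ≤ m) :
    ((m^3 + m*(2*m+1) : ℝ)) ^ ((1:ℝ)/3) < m + (2*m+1)/(3*m+2) :=
  heron_bound_family_general m
end

section
/- For real N with m² < N < (m+1)² (m a positive integer) and n = √N, setting d₁ = n² − m² and d₂ = (m+1)² − n², we have n < m + (m+1)d₁/((m+1)d₁ + m·d₂). -/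
/-!
Write `x = n - m ∈ (0, 1)`, so that `d₁ = x (n + m)` and `d₂ = (1 - x) (m + 1 + n)`. Clearing the
denominator, the claim becomes `x (1 - x) · m (m + 1 + n) < x (1 - x) · (m + 1) (n + m)`, i.e. the
counterpoised weighting inequality `m (m + 1 + n) < (m + 1) (n + m)`, whose two sides differ by `n`.
-/

lemma sub_mul_weighted_denom_eq (a n : ℝ) :
    (a + 1) * (n ^ 2 - a ^ 2) - (n - a) * ((a + 1) * (n ^ 2 - a ^ 2) + a * ((a + 1) ^ 2 - n ^ 2)) =
      (n - a) * (a + 1 - n) * n := by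
  ring

lemma lt_add_weighted_div_of_lt_of_lt {a n : ℝ} (ha : 0 ≤ a) (h₁ : a < n) (h₂ : n < a + 1) :
    n < a + (a + 1) * (n ^ 2 - a ^ 2) / ((a + 1) * (n ^ 2 - a ^ 2) + a * ((a + 1) ^ 2 - n ^ 2)) := by
  have hd₁ : 0 < n ^ 2 - a ^ 2 := by nlinarith
  have hd₂ : 0 < (a + 1) ^ 2 - n ^ 2 := by nlinarith
  have hD : 0 < (a + 1) * (n ^ 2 - a ^ 2) + a * ((a + 1) ^ 2 - n ^ 2) := by positivity
  rw [← sub_lt_iff_lt_add', lt_div_iff₀ hD, ← sub_pos, sub_mul_weighted_denom_eq]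
  have : 0 < n - a := sub_pos.mpr h₁
  have : 0 < a + 1 - n := sub_pos.mpr h₂
  have : 0 < n := ha.trans_lt h₁
  positivity

theorem sqrt_weighted_upper_bound_general (m : ℕ) (N n d₁ d₂ : ℝ)
    (h₁ : (m:ℝ)^2 < N) (h₂ : N < ((m:ℝ)+1)^2) (hn : n = Real.sqrt N)
    (hd₁ : d₁ = n^2 - (m:ℝ)^2) (hd₂ : d₂ = ((m:ℝ)+1)^2 - n^2) :
    n < (m:ℝ) + ((m:ℝ)+1)*d₁/(((m:ℝ)+1)*d₁ + (m:ℝ)*d₂) := by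
  have hm : (0:ℝ) ≤ m := m.cast_nonneg
  have hmn : (m:ℝ) < n := hn ▸ (Real.lt_sqrt hm).mpr h₁
  have hnm : n < (m:ℝ) + 1 := hn ▸ (Real.sqrt_lt' (by positivity)).mpr h₂
  subst hd₁ hd₂
  exact lt_add_weighted_div_of_lt_of_lt hm hmn hnm

theorem sqrt_weighted_upper_bound (m : ℕ) (hm : 1 ≤ m) (N n d₁ d₂ : ℝ)
    (h₁ : (m:ℝ)^2 < N) (h₂ : N < ((m:ℝ)+1)^2) (hn : n = Real.sqrt N)
    (hd₁ : d₁ = n^2 - (m:ℝ)^2) (hd₂ : d₂ = ((m:ℝ)+1)^2 - n^2) :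
    n < (m:ℝ) + ((m:ℝ)+1)*d₁/(((m:ℝ)+1)*d₁ + (m:ℝ)*d₂) :=
  sqrt_weighted_upper_bound_general m N n d₁ d₂ h₁ h₂ hn hd₁ hd₂
end

section
/- Let m be a positive integer, m³ < N < (m+1)³, n = N^(1/3), d₁ = N − m³, d₂ = (m+1)³ − N. Then n > ((m+1)d₁ + m·d₂)/(d₁ + d₂) = m + d₁/(3m(m+1)+1). -/
/-!
The cube root is strictly concave on `[0, ∞)`, so on `[m³, (m+1)³]` it lies strictly above its
chord, which joins `(m³, m)` to `((m+1)³, m+1)`; at `N` the chord takes the value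
`((m+1)d₁ + m d₂)/(d₁ + d₂)`. The closed form follows from `d₁ + d₂ = 3m(m+1) + 1`.
-/

theorem StrictConcaveOn.chord_lt {𝕜 : Type*} [Field 𝕜] [LinearOrder 𝕜] [IsStrictOrderedRing 𝕜]
    {s : Set 𝕜} {f : 𝕜 → 𝕜} (hf : StrictConcaveOn 𝕜 s f) {x y z : 𝕜} (hx : x ∈ s) (hy : y ∈ s)
    (hxz : x < z) (hzy : z < y) :
    ((y - z) * f x + (z - x) * f y) / (y - x) < f z := by
  have hxy : 0 < y - x := by linarith
  have hcombo : (y - z) / (y - x) * x + (z - x) / (y - x) * y = z := by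
    field_simp; ring
  have hchord := hf.2 hx hy (by linarith : x ≠ y) (div_pos (by linarith : 0 < y - z) hxy)
    (div_pos (by linarith : 0 < z - x) hxy) (by field_simp; ring)
  simp only [smul_eq_mul, hcombo] at hchord
  calc ((y - z) * f x + (z - x) * f y) / (y - x)
      = (y - z) / (y - x) * f x + (z - x) / (y - x) * f y := by field_simp
    _ < f z := hchord

theorem Real.pow_rpow_one_div_three {x : ℝ} (hx : 0 ≤ x) : (x ^ 3) ^ ((1 : ℝ) / 3) = x := by
  simpa using Real.pow_rpow_inv_natCast hx (n := 3) (by norm_num)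

theorem cube_chord_lower_bound_general (m : ℕ) (N n d₁ d₂ : ℝ)
    (h₁ : (m:ℝ)^3 < N) (h₂ : N < ((m:ℝ)+1)^3) (hn : n = N ^ ((1:ℝ)/3))
    (hd₁ : d₁ = N - (m:ℝ)^3) (hd₂ : d₂ = ((m:ℝ)+1)^3 - N) :
    n > (((m:ℝ)+1)*d₁ + (m:ℝ)*d₂)/(d₁ + d₂) ∧
    (((m:ℝ)+1)*d₁ + (m:ℝ)*d₂)/(d₁ + d₂) = (m:ℝ) + d₁/(3*(m:ℝ)*((m:ℝ)+1)+1) := by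
  have hm : (0 : ℝ) ≤ m := m.cast_nonneg
  have hsum : d₁ + d₂ = 3*(m:ℝ)*((m:ℝ)+1)+1 := by rw [hd₁, hd₂]; ring
  have hchord := (Real.strictConcaveOn_rpow (p := 1 / 3) (by norm_num) (by norm_num)).chord_lt
    (Set.mem_Ici.2 (by positivity : (0 : ℝ) ≤ (m:ℝ)^3))
    (Set.mem_Ici.2 (by positivity : (0 : ℝ) ≤ ((m:ℝ)+1)^3)) h₁ h₂
  simp only [Real.pow_rpow_one_div_three hm,
    Real.pow_rpow_one_div_three (by positivity : (0:ℝ) ≤ m + 1)] at hchord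
  constructor
  · rw [gt_iff_lt, hn, hd₁, hd₂]
    refine Eq.trans_lt ?_ hchord
    ring
  · have hpos : 0 < d₁ + d₂ := by rw [hsum]; positivity
    calc (((m:ℝ)+1)*d₁ + (m:ℝ)*d₂)/(d₁ + d₂) = ((m:ℝ) * (d₁ + d₂) + d₁)/(d₁ + d₂) := by ring
      _ = (m:ℝ) + d₁/(d₁ + d₂) := by rw [add_div, mul_div_cancel_right₀ _ hpos.ne']
      _ = (m:ℝ) + d₁/(3*(m:ℝ)*((m:ℝ)+1)+1) := by rw [hsum]

theorem cube_chord_lower_bound (m : ℕ) (hm : 1 ≤ m) (N n d₁ d₂ : ℝ)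
    (h₁ : (m:ℝ)^3 < N) (h₂ : N < ((m:ℝ)+1)^3) (hn : n = N ^ ((1:ℝ)/3))
    (hd₁ : d₁ = N - (m:ℝ)^3) (hd₂ : d₂ = ((m:ℝ)+1)^3 - N) :
    n > (((m:ℝ)+1)*d₁ + (m:ℝ)*d₂)/(d₁ + d₂) ∧
    (((m:ℝ)+1)*d₁ + (m:ℝ)*d₂)/(d₁ + d₂) = (m:ℝ) + d₁/(3*(m:ℝ)*((m:ℝ)+1)+1) :=
  cube_chord_lower_bound_general m N n d₁ d₂ h₁ h₂ hn hd₁ hd₂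
end

section
/- Let m be a positive integer, m³ < N < (m+1)³, n = N^(1/3), d₁ = N − m³, d₂ = (m+1)³ − N. If n² > m(m+1), then n < m + (m+1)d₁/((m+1)d₁ + m·d₂); if n² < m(m+1), then n > m + (m+1)d₁/((m+1)d₁ + m·d₂). -/
/-!
Writing `N = n³`, the denominator of Heron's formula is
`D = (m+1)(n³ - m³) + m((m+1)³ - n³) > 0`, and the polynomial identity
`(heron - n) · D = (n - m)(m + 1 - n)(n² - m(m+1))` shows that, for `m < n < m + 1`,
the error of Heron's approximation has the sign of `n² - m(m+1)`.
-/

section HeronCubeRoot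

variable {K : Type*}

def heronCubeRoot [Field K] (m N : K) : K :=
  m + (m + 1) * (N - m ^ 3) / ((m + 1) * (N - m ^ 3) + m * ((m + 1) ^ 3 - N))

theorem heronCubeRoot_error_mul_denom [CommRing K] (m n : K) :
    (m - n) * ((m + 1) * (n ^ 3 - m ^ 3) + m * ((m + 1) ^ 3 - n ^ 3)) + (m + 1) * (n ^ 3 - m ^ 3)
      = (n - m) * (m + 1 - n) * (n ^ 2 - m * (m + 1)) := by
  ring

theorem heronCubeRoot_sub [Field K] {m n : K}
    (hD : (m + 1) * (n ^ 3 - m ^ 3) + m * ((m + 1) ^ 3 - n ^ 3) ≠ 0) :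
    heronCubeRoot m (n ^ 3) - n
      = (n - m) * (m + 1 - n) * (n ^ 2 - m * (m + 1))
        / ((m + 1) * (n ^ 3 - m ^ 3) + m * ((m + 1) ^ 3 - n ^ 3)) := by
  rw [eq_div_iff hD, ← heronCubeRoot_error_mul_denom, heronCubeRoot]
  field_simp
  ring

variable [Field K] [LinearOrder K] [IsStrictOrderedRing K] {m n : K}

theorem heronCubeRoot_denom_pos (hm : 0 ≤ m) (hmn : m < n) (hnm : n < m + 1) :
    0 < (m + 1) * (n ^ 3 - m ^ 3) + m * ((m + 1) ^ 3 - n ^ 3) := by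
  have hlow : m ^ 3 < n ^ 3 := pow_lt_pow_left₀ hmn hm three_ne_zero
  have hhigh : n ^ 3 < (m + 1) ^ 3 := pow_lt_pow_left₀ hnm (hm.trans hmn.le) three_ne_zero
  have hright := mul_nonneg hm (sub_nonneg.2 hhigh.le)
  have hleft := mul_pos (by linarith : 0 < m + 1) (sub_pos.2 hlow)
  linarith

theorem lt_heronCubeRoot (hm : 0 ≤ m) (hmn : m < n) (hnm : n < m + 1)
    (hn : m * (m + 1) < n ^ 2) : n < heronCubeRoot m (n ^ 3) := by
  have hD := heronCubeRoot_denom_pos hm hmn hnm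
  rw [← sub_pos, heronCubeRoot_sub hD.ne']
  have hgap := mul_pos (sub_pos.2 hmn) (sub_pos.2 hnm)
  exact div_pos (mul_pos hgap (sub_pos.2 hn)) hD

theorem heronCubeRoot_lt (hm : 0 ≤ m) (hmn : m < n) (hnm : n < m + 1)
    (hn : n ^ 2 < m * (m + 1)) : heronCubeRoot m (n ^ 3) < n := by
  have hD := heronCubeRoot_denom_pos hm hmn hnm
  rw [← sub_neg, heronCubeRoot_sub hD.ne']
  have hgap := mul_pos (sub_pos.2 hmn) (sub_pos.2 hnm)
  exact div_neg_of_neg_of_pos (mul_neg_of_pos_of_neg hgap (sub_neg.2 hn)) hD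

end HeronCubeRoot

theorem heron_contingent_bound_general (m : ℕ) (N n d₁ d₂ : ℝ)
    (h₁ : (m:ℝ)^3 < N) (h₂ : N < ((m:ℝ)+1)^3) (hn : n = N ^ ((1:ℝ)/3))
    (hd₁ : d₁ = N - (m:ℝ)^3) (hd₂ : d₂ = ((m:ℝ)+1)^3 - N) :
    (n^2 > (m:ℝ)*((m:ℝ)+1) → n < (m:ℝ) + ((m:ℝ)+1)*d₁/(((m:ℝ)+1)*d₁ + (m:ℝ)*d₂)) ∧
    (n^2 < (m:ℝ)*((m:ℝ)+1) → n > (m:ℝ) + ((m:ℝ)+1)*d₁/(((m:ℝ)+1)*d₁ + (m:ℝ)*d₂)) := by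
  have hN : 0 ≤ N := (pow_nonneg m.cast_nonneg 3).trans h₁.le
  have hn0 : 0 ≤ n := hn ▸ Real.rpow_nonneg hN _
  have hcube : n ^ 3 = N := by simpa [hn] using Real.rpow_inv_natCast_pow hN three_ne_zero
  have hmn : (m:ℝ) < n := lt_of_pow_lt_pow_left₀ 3 hn0 (hcube ▸ h₁)
  have hnm : n < m + 1 := lt_of_pow_lt_pow_left₀ 3 (by positivity) (hcube ▸ h₂)
  subst hd₁ hd₂
  show (_ → n < heronCubeRoot (m:ℝ) N) ∧ (_ → heronCubeRoot (m:ℝ) N < n)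
  rw [← hcube]
  exact ⟨lt_heronCubeRoot m.cast_nonneg hmn hnm, heronCubeRoot_lt m.cast_nonneg hmn hnm⟩

theorem heron_contingent_bound (m : ℕ) (hm : 1 ≤ m) (N n d₁ d₂ : ℝ)
    (h₁ : (m:ℝ)^3 < N) (h₂ : N < ((m:ℝ)+1)^3) (hn : n = N ^ ((1:ℝ)/3))
    (hd₁ : d₁ = N - (m:ℝ)^3) (hd₂ : d₂ = ((m:ℝ)+1)^3 - N) :
    (n^2 > (m:ℝ)*((m:ℝ)+1) → n < (m:ℝ) + ((m:ℝ)+1)*d₁/(((m:ℝ)+1)*d₁ + (m:ℝ)*d₂)) ∧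
    (n^2 < (m:ℝ)*((m:ℝ)+1) → n > (m:ℝ) + ((m:ℝ)+1)*d₁/(((m:ℝ)+1)*d₁ + (m:ℝ)*d₂)) :=
  heron_contingent_bound_general m N n d₁ d₂ h₁ h₂ hn hd₁ hd₂
end

section
/- If N > (m + 1/2)³ with m a positive integer and m³ < N < (m+1)³, then N² > m³(m+1)³, and hence Heron's approximation m + (m+1)d₁/((m+1)d₁ + m·d₂) is an upper bound for N^(1/3), where d₁ = N − m³, d₂ = (m+1)³ − N. -/
/-!
With `b = a + 1`, Heron's approximation `a + b d₁ / (b d₁ + a d₂)` equals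
`(b²d₁ + a²d₂) / (b d₁ + a d₂)`, and the cube of this numerator minus `N` times the cube of the
denominator factors as `(b - a)³ d₁ d₂ (N² - a³b³)`. So the approximation exceeds `N^(1/3)`
exactly when `N² > a³(a + 1)³`, which follows from `N > (a + 1/2)³` because
`(a + 1/2)² ≥ a(a + 1)`.
-/

theorem heron_num_cube_sub {R : Type*} [CommRing R] (a b N : R) :
    (b ^ 2 * (N - a ^ 3) + a ^ 2 * (b ^ 3 - N)) ^ 3 - N * (b * (N - a ^ 3) + a * (b ^ 3 - N)) ^ 3
      = (b - a) ^ 3 * (N - a ^ 3) * (b ^ 3 - N) * (N ^ 2 - a ^ 3 * b ^ 3) := by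
  ring

noncomputable def heronCbrt (a N : ℝ) : ℝ :=
  a + (a + 1) * (N - a ^ 3) / ((a + 1) * (N - a ^ 3) + a * ((a + 1) ^ 3 - N))

section Heron

variable {a N : ℝ}

theorem heronCbrt_denom_pos (ha : 0 ≤ a) (hN₁ : a ^ 3 < N) (hN₂ : N < (a + 1) ^ 3) :
    0 < (a + 1) * (N - a ^ 3) + a * ((a + 1) ^ 3 - N) := by
  have := sub_pos.mpr hN₁
  have := sub_pos.mpr hN₂
  positivity

theorem heronCbrt_nonneg (ha : 0 ≤ a) (hN₁ : a ^ 3 < N) (hN₂ : N < (a + 1) ^ 3) :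
    0 ≤ heronCbrt a N :=
  add_nonneg ha <| div_nonneg (mul_nonneg (by positivity) (sub_pos.mpr hN₁).le)
    (heronCbrt_denom_pos ha hN₁ hN₂).le

theorem heronCbrt_eq_div (ha : 0 ≤ a) (hN₁ : a ^ 3 < N) (hN₂ : N < (a + 1) ^ 3) :
    heronCbrt a N = ((a + 1) ^ 2 * (N - a ^ 3) + a ^ 2 * ((a + 1) ^ 3 - N))
      / ((a + 1) * (N - a ^ 3) + a * ((a + 1) ^ 3 - N)) := by
  have := heronCbrt_denom_pos ha hN₁ hN₂
  rw [heronCbrt]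
  field_simp
  ring

theorem lt_heronCbrt_pow_three (ha : 0 ≤ a) (hN₁ : a ^ 3 < N) (hN₂ : N < (a + 1) ^ 3)
    (hN : a ^ 3 * (a + 1) ^ 3 < N ^ 2) : N < heronCbrt a N ^ 3 := by
  have := sub_pos.mpr hN₁
  have := sub_pos.mpr hN₂
  have := sub_pos.mpr hN
  rw [heronCbrt_eq_div ha hN₁ hN₂, div_pow,
    lt_div_iff₀ (pow_pos (heronCbrt_denom_pos ha hN₁ hN₂) 3), ← sub_pos, heron_num_cube_sub,
    add_sub_cancel_left, one_pow, one_mul]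
  positivity

theorem rpow_one_third_lt_heronCbrt (ha : 0 ≤ a) (hN₁ : a ^ 3 < N) (hN₂ : N < (a + 1) ^ 3)
    (hN : a ^ 3 * (a + 1) ^ 3 < N ^ 2) : N ^ ((1 : ℝ) / 3) < heronCbrt a N := by
  rw [one_div, Real.rpow_inv_lt_iff_of_pos ((pow_nonneg ha 3).trans hN₁.le)
    (heronCbrt_nonneg ha hN₁ hN₂) three_pos, show (3 : ℝ) = (3 : ℕ) by norm_num,
    Real.rpow_natCast]
  exact lt_heronCbrt_pow_three ha hN₁ hN₂ hN

end Heron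

theorem pow_three_mul_add_one_pow_three_lt_sq {x N : ℝ} (hx : 0 ≤ x + 1 / 2)
    (hN : (x + 1 / 2) ^ 3 < N) : x ^ 3 * (x + 1) ^ 3 < N ^ 2 :=
  calc x ^ 3 * (x + 1) ^ 3 = (x * (x + 1)) ^ 3 := by ring
    _ ≤ ((x + 1 / 2) ^ 2) ^ 3 := by
      rw [Odd.pow_le_pow (by decide)]
      linarith [show (x + 1 / 2) ^ 2 = x * (x + 1) + 1 / 4 by ring]
    _ = ((x + 1 / 2) ^ 3) ^ 2 := by ring
    _ < N ^ 2 := by gcongr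

theorem heron_upper_of_large_N_general (m : ℕ) (N n d₁ d₂ : ℝ)
    (h₁ : (m:ℝ)^3 < N) (h₂ : N < ((m:ℝ)+1)^3) (hn : n = N ^ ((1:ℝ)/3))
    (hd₁ : d₁ = N - (m:ℝ)^3) (hd₂ : d₂ = ((m:ℝ)+1)^3 - N)
    (hN : N > ((m:ℝ) + 1/2)^3) :
    N^2 > (m:ℝ)^3*((m:ℝ)+1)^3 ∧
    n < (m:ℝ) + ((m:ℝ)+1)*d₁/(((m:ℝ)+1)*d₁ + (m:ℝ)*d₂) := by
  have hsq : (m:ℝ)^3*((m:ℝ)+1)^3 < N^2 :=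
    pow_three_mul_add_one_pow_three_lt_sq (by positivity) hN
  subst hn hd₁ hd₂
  exact ⟨hsq, rpow_one_third_lt_heronCbrt (Nat.cast_nonneg m) h₁ h₂ hsq⟩

theorem heron_upper_of_large_N (m : ℕ) (hm : 1 ≤ m) (N n d₁ d₂ : ℝ)
    (h₁ : (m:ℝ)^3 < N) (h₂ : N < ((m:ℝ)+1)^3) (hn : n = N ^ ((1:ℝ)/3))
    (hd₁ : d₁ = N - (m:ℝ)^3) (hd₂ : d₂ = ((m:ℝ)+1)^3 - N)
    (hN : N > ((m:ℝ) + 1/2)^3) :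
    N^2 > (m:ℝ)^3*((m:ℝ)+1)^3 ∧
    n < (m:ℝ) + ((m:ℝ)+1)*d₁/(((m:ℝ)+1)*d₁ + (m:ℝ)*d₂) :=
  heron_upper_of_large_N_general m N n d₁ d₂ h₁ h₂ hn hd₁ hd₂ hN
end

section
/- Let m be a positive integer, m³ < N < (m+1)³, n = N^(1/3), d₁ = N − m³, d₂ = (m+1)³ − N. Then n < ((m+1)³d₁ + m³d₂)/((m+1)²d₁ + m²d₂) throughout the whole range. -/
/-!
Write `x = N^(1/3)`, `a = m`, `b = m + 1`, so that `d₁ = x³ - a³` and `d₂ = b³ - x³`.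
Both differences of cubes factor, and `b²(b - x)d₁ - a²(x - a)d₂` becomes
`(b - x)(x - a)(b - a)((a + b)x² + abx)`, which is positive for `0 ≤ a < x < b`.
For `b = a + 1` this is the identity `(2m+1)n² + m(m+1)n > 0` of the paper.
-/

theorem weighted_cubes_sub_mul_eq (a b x : ℝ) :
    b ^ 3 * (x ^ 3 - a ^ 3) + a ^ 3 * (b ^ 3 - x ^ 3)
        - x * (b ^ 2 * (x ^ 3 - a ^ 3) + a ^ 2 * (b ^ 3 - x ^ 3))
      = (b - x) * (x - a) * (b - a) * ((a + b) * x ^ 2 + a * b * x) := by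
  ring

theorem lt_weighted_cubes_div {a b x : ℝ} (ha : 0 ≤ a) (hax : a < x) (hxb : x < b) :
    x < (b ^ 3 * (x ^ 3 - a ^ 3) + a ^ 3 * (b ^ 3 - x ^ 3))
        / (b ^ 2 * (x ^ 3 - a ^ 3) + a ^ 2 * (b ^ 3 - x ^ 3)) := by
  have hx : 0 < x := ha.trans_lt hax
  have hd₁ : 0 < x ^ 3 - a ^ 3 := sub_pos.2 (pow_lt_pow_left₀ hax ha three_ne_zero)
  have hd₂ : 0 < b ^ 3 - x ^ 3 := sub_pos.2 (pow_lt_pow_left₀ hxb hx.le three_ne_zero)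
  have hb : 0 < b := hx.trans hxb
  have hden : 0 < b ^ 2 * (x ^ 3 - a ^ 3) + a ^ 2 * (b ^ 3 - x ^ 3) := by positivity
  have hgap : 0 < (b - x) * (x - a) * (b - a) * ((a + b) * x ^ 2 + a * b * x) :=
    mul_pos (mul_pos (mul_pos (by linarith) (by linarith)) (by linarith)) (by positivity)
  rw [lt_div_iff₀ hden]
  linarith [weighted_cubes_sub_mul_eq a b x]

theorem cube_upper_bound_22_general (m : ℕ) (N n d₁ d₂ : ℝ)
    (h₁ : (m:ℝ)^3 < N) (h₂ : N < ((m:ℝ)+1)^3) (hn : n = N ^ ((1:ℝ)/3))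
    (hd₁ : d₁ = N - (m:ℝ)^3) (hd₂ : d₂ = ((m:ℝ)+1)^3 - N) :
    n < (((m:ℝ)+1)^3*d₁ + (m:ℝ)^3*d₂)/(((m:ℝ)+1)^2*d₁ + (m:ℝ)^2*d₂) := by
  have hN : 0 ≤ N := (by positivity : (0:ℝ) ≤ (m:ℝ) ^ 3).trans h₁.le
  have hn₀ : 0 ≤ n := hn ▸ Real.rpow_nonneg hN _
  have hcube : n ^ 3 = N := by
    rw [hn, ← Real.rpow_natCast, ← Real.rpow_mul hN]
    norm_num
  subst hd₁ hd₂
  rw [← hcube] at h₁ h₂ ⊢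
  exact lt_weighted_cubes_div (Nat.cast_nonneg m)
    (lt_of_pow_lt_pow_left₀ 3 hn₀ h₁) (lt_of_pow_lt_pow_left₀ 3 (by positivity) h₂)

theorem cube_upper_bound_22 (m : ℕ) (hm : 1 ≤ m) (N n d₁ d₂ : ℝ)
    (h₁ : (m:ℝ)^3 < N) (h₂ : N < ((m:ℝ)+1)^3) (hn : n = N ^ ((1:ℝ)/3))
    (hd₁ : d₁ = N - (m:ℝ)^3) (hd₂ : d₂ = ((m:ℝ)+1)^3 - N) :
    n < (((m:ℝ)+1)^3*d₁ + (m:ℝ)^3*d₂)/(((m:ℝ)+1)^2*d₁ + (m:ℝ)^2*d₂) :=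
  cube_upper_bound_22_general m N n d₁ d₂ h₁ h₂ hn hd₁ hd₂
end

section
/- Let m be a positive integer, n real with m < n < m+1, Δ₁ = (n³−m³) − (n−m)³, Δ₂ = ((m+1)³−n³) − (m+1−n)³. Then for i = 1 and i = 2, (m+1)^i·Δ₁ + m^i·Δ₂ = 3m(m+1)n^i, and consequently n = m + (m+1)Δ₁/((m+1)Δ₁ + m·Δ₂). -/
/-!
Both defects factor through `a³ - b³ - (a - b)³ = 3ab(a - b)`: with `C = 3m(m+1)n` one gets
`(m+1)Δ₁ = C(n - m)` and `mΔ₂ = C(m + 1 - n)`. So `(m+1)Δ₁` and `mΔ₂` are `C` times the barycentric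
weights of `n` in `[m, m+1]`, which reproduce the affine functions `1` and `n`; and
`(m+1)Δ₁ / C = n - m`.
-/

theorem pow_three_sub_pow_three_sub_sub_pow_three {R : Type*} [CommRing R] (a b : R) :
    (a^3 - b^3) - (a - b)^3 = 3*a*b*(a - b) := by
  ring

theorem enestrom_identity_general (m : ℕ) (hm : 1 ≤ m) (n Δ₁ Δ₂ : ℝ)
    (h₁ : (m:ℝ) < n)
    (hΔ₁ : Δ₁ = (n^3 - (m:ℝ)^3) - (n-(m:ℝ))^3)
    (hΔ₂ : Δ₂ = (((m:ℝ)+1)^3 - n^3) - ((m:ℝ)+1-n)^3) :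
    (∀ i : ℕ, i = 1 ∨ i = 2 →
      ((m:ℝ)+1)^i*Δ₁ + (m:ℝ)^i*Δ₂ = 3*(m:ℝ)*((m:ℝ)+1)*n^i) ∧
    n = (m:ℝ) + ((m:ℝ)+1)*Δ₁/(((m:ℝ)+1)*Δ₁ + (m:ℝ)*Δ₂) := by
  have hm_pos : (0:ℝ) < m := by exact_mod_cast hm
  have hn_pos : 0 < n := hm_pos.trans h₁
  have hL : ((m:ℝ)+1)*Δ₁ = 3*m*(m+1)*n*(n - m) := by
    rw [hΔ₁, pow_three_sub_pow_three_sub_sub_pow_three]; ring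
  have hR : (m:ℝ)*Δ₂ = 3*m*(m+1)*n*(m + 1 - n) := by
    rw [hΔ₂, pow_three_sub_pow_three_sub_sub_pow_three]; ring
  have hsum : ((m:ℝ)+1)*Δ₁ + m*Δ₂ = 3*m*(m+1)*n := by linear_combination hL + hR
  refine ⟨?_, ?_⟩
  · rintro i (rfl | rfl)
    · linear_combination hsum
    · linear_combination ((m:ℝ)+1)*hL + m*hR
  · have hC : (3:ℝ)*m*(m+1)*n ≠ 0 := by positivity
    rw [hsum, hL, mul_div_cancel_left₀ _ hC]
    ring

theorem enestrom_identity (m : ℕ) (hm : 1 ≤ m) (n Δ₁ Δ₂ : ℝ)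
    (h₁ : (m:ℝ) < n) (h₂ : n < (m:ℝ)+1)
    (hΔ₁ : Δ₁ = (n^3 - (m:ℝ)^3) - (n-(m:ℝ))^3)
    (hΔ₂ : Δ₂ = (((m:ℝ)+1)^3 - n^3) - ((m:ℝ)+1-n)^3) :
    (∀ i : ℕ, i = 1 ∨ i = 2 →
      ((m:ℝ)+1)^i*Δ₁ + (m:ℝ)^i*Δ₂ = 3*(m:ℝ)*((m:ℝ)+1)*n^i) ∧
    n = (m:ℝ) + ((m:ℝ)+1)*Δ₁/(((m:ℝ)+1)*Δ₁ + (m:ℝ)*Δ₂) :=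
  enestrom_identity_general m hm n Δ₁ Δ₂ h₁ hΔ₁ hΔ₂
end

section
/- Let m be a positive integer, m³ < N < (m+1)³, n = N^(1/3), d₁ = N − m³, d₂ = (m+1)³ − N. Then ((m+1)²d₁ + m²d₂)/((m+1)d₁ + m·d₂) − n = (n² − m(m+1))(n−m)(m+1−n)/((m+1)d₁ + m·d₂). -/
section Heron

variable {K : Type*} [Field K]

theorem heron_denom_eq (m N : K) :
    (m + 1) * (N - m ^ 3) + m * ((m + 1) ^ 3 - N) = N + m * (m + 1) * (2 * m + 1) := by
  ring

/-- With `N = x ^ 3` the error of Heron's approximation is a polynomial in `x` over the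
denominator: both sides have numerator `(2m+1)x³ + m²(m+1)² - x⁴ - m(m+1)(2m+1)x`. -/
theorem heron_sub_cbrt_eq (m x : K)
    (hD : (m + 1) * (x ^ 3 - m ^ 3) + m * ((m + 1) ^ 3 - x ^ 3) ≠ 0) :
    ((m + 1) ^ 2 * (x ^ 3 - m ^ 3) + m ^ 2 * ((m + 1) ^ 3 - x ^ 3)) /
        ((m + 1) * (x ^ 3 - m ^ 3) + m * ((m + 1) ^ 3 - x ^ 3)) - x =
      (x ^ 2 - m * (m + 1)) * (x - m) * (m + 1 - x) /
        ((m + 1) * (x ^ 3 - m ^ 3) + m * ((m + 1) ^ 3 - x ^ 3)) := by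
  rw [eq_div_iff hD, sub_mul, div_mul_cancel₀ _ hD]
  ring

end Heron

theorem heron_error_identity_general (m : ℕ) (N n d₁ d₂ : ℝ)
    (h₁ : (m:ℝ)^3 < N) (hn : n = N ^ ((1:ℝ)/3))
    (hd₁ : d₁ = N - (m:ℝ)^3) (hd₂ : d₂ = ((m:ℝ)+1)^3 - N) :
    (((m:ℝ)+1)^2*d₁ + (m:ℝ)^2*d₂)/(((m:ℝ)+1)*d₁ + (m:ℝ)*d₂) - n =
      (n^2 - (m:ℝ)*((m:ℝ)+1))*(n-(m:ℝ))*((m:ℝ)+1-n)/(((m:ℝ)+1)*d₁ + (m:ℝ)*d₂) := by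
  have hN : 0 < N := (pow_nonneg m.cast_nonneg 3).trans_lt h₁
  have hn3 : n ^ 3 = N := by
    rw [hn, one_div, ← Nat.cast_ofNat, Real.rpow_inv_natCast_pow hN.le three_ne_zero]
  subst hd₁ hd₂ hn3
  exact heron_sub_cbrt_eq _ _ (by rw [heron_denom_eq]; positivity)

theorem heron_error_identity (m : ℕ) (hm : 1 ≤ m) (N n d₁ d₂ : ℝ)
    (h₁ : (m:ℝ)^3 < N) (h₂ : N < ((m:ℝ)+1)^3) (hn : n = N ^ ((1:ℝ)/3))
    (hd₁ : d₁ = N - (m:ℝ)^3) (hd₂ : d₂ = ((m:ℝ)+1)^3 - N) :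
    (((m:ℝ)+1)^2*d₁ + (m:ℝ)^2*d₂)/(((m:ℝ)+1)*d₁ + (m:ℝ)*d₂) - n =
      (n^2 - (m:ℝ)*((m:ℝ)+1))*(n-(m:ℝ))*((m:ℝ)+1-n)/(((m:ℝ)+1)*d₁ + (m:ℝ)*d₂) :=
  heron_error_identity_general m N n d₁ d₂ h₁ hn hd₁ hd₂
end

section
/- Let m be a positive integer, m³ < N < (m+1)³, n = N^(1/3), d₁ = N − m³, d₂ = (m+1)³ − N. Then |((m+1)²d₁ + m²d₂)/((m+1)d₁ + m·d₂) − n| < 1/(12m²). -/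
/-!
Write `N = n³` with `m < n < m + 1`. The error of Heron's approximation factors as
`(n - m)(m + 1 - n)(n² - m(m + 1))` divided by `(m + 1)d₁ + m d₂ = n³ + m(m + 1)(2m + 1)`.
The first two factors have product at most `1/4`, the third is at most `m + 1` in absolute value,
and the denominator exceeds `3m²(m + 1)`, so the error is below `1/(12m²)`.
-/

noncomputable def heronApprox (m N : ℝ) : ℝ :=
  ((m + 1) ^ 2 * (N - m ^ 3) + m ^ 2 * ((m + 1) ^ 3 - N)) /
    ((m + 1) * (N - m ^ 3) + m * ((m + 1) ^ 3 - N))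

lemma heronApprox_sub_eq (m n : ℝ)
    (hden : (m + 1) * (n ^ 3 - m ^ 3) + m * ((m + 1) ^ 3 - n ^ 3) ≠ 0) :
    heronApprox m (n ^ 3) - n = (n - m) * (m + 1 - n) * (n ^ 2 - m * (m + 1)) /
      ((m + 1) * (n ^ 3 - m ^ 3) + m * ((m + 1) ^ 3 - n ^ 3)) := by
  rw [heronApprox, div_sub' hden]
  ring

lemma three_mul_sq_mul_succ_lt_heron_denom {m n : ℝ} (hm : 0 < m) (hmn : m < n) :
    3 * m ^ 2 * (m + 1) < (m + 1) * (n ^ 3 - m ^ 3) + m * ((m + 1) ^ 3 - n ^ 3) := by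
  have : m ^ 3 < n ^ 3 := by gcongr
  nlinarith

lemma mul_sub_le_one_fourth (m n : ℝ) : (n - m) * (m + 1 - n) ≤ 1 / 4 := by
  nlinarith [sq_nonneg (2 * n - 2 * m - 1)]

lemma abs_sq_sub_mul_succ_le {m n : ℝ} (hm : 0 ≤ m) (h₁ : m ≤ n) (h₂ : n ≤ m + 1) :
    |n ^ 2 - m * (m + 1)| ≤ m + 1 := by
  rw [abs_le]
  constructor <;> nlinarith

lemma abs_heronApprox_sub_lt {m n : ℝ} (hm : 0 < m) (h₁ : m < n) (h₂ : n < m + 1) :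
    |heronApprox m (n ^ 3) - n| < 1 / (12 * m ^ 2) := by
  set D := (m + 1) * (n ^ 3 - m ^ 3) + m * ((m + 1) ^ 3 - n ^ 3)
  have hD : 3 * m ^ 2 * (m + 1) < D := three_mul_sq_mul_succ_lt_heron_denom hm h₁
  have hD₀ : 0 < D := lt_trans (by positivity) hD
  have hprod₀ : 0 ≤ (n - m) * (m + 1 - n) := mul_nonneg (by linarith) (by linarith)
  calc |heronApprox m (n ^ 3) - n|
      = (n - m) * (m + 1 - n) * |n ^ 2 - m * (m + 1)| / D := by
        rw [heronApprox_sub_eq m n hD₀.ne', abs_div, abs_mul, abs_of_nonneg hprod₀,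
          abs_of_pos hD₀]
    _ ≤ 1 / 4 * (m + 1) / D := by
        gcongr
        · exact mul_sub_le_one_fourth m n
        · exact abs_sq_sub_mul_succ_le hm.le h₁.le h₂.le
    _ < 1 / 4 * (m + 1) / (3 * m ^ 2 * (m + 1)) := by gcongr
    _ = 1 / (12 * m ^ 2) := by field_simp; ring

theorem heron_error_bound (m : ℕ) (hm : 1 ≤ m) (N n d₁ d₂ : ℝ)
    (h₁ : (m:ℝ)^3 < N) (h₂ : N < ((m:ℝ)+1)^3) (hn : n = N ^ ((1:ℝ)/3))
    (hd₁ : d₁ = N - (m:ℝ)^3) (hd₂ : d₂ = ((m:ℝ)+1)^3 - N) :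
    |(((m:ℝ)+1)^2*d₁ + (m:ℝ)^2*d₂)/(((m:ℝ)+1)*d₁ + (m:ℝ)*d₂) - n| <
      1/(12*(m:ℝ)^2) := by
  have hm₀ : (0:ℝ) < m := by exact_mod_cast hm
  have hN₀ : 0 < N := lt_trans (by positivity) h₁
  have hn₀ : 0 ≤ n := hn ▸ Real.rpow_nonneg hN₀.le _
  have hN : N = n ^ 3 := by
    rw [hn, ← Real.rpow_natCast, ← Real.rpow_mul hN₀.le]
    norm_num
  subst hd₁ hd₂ hN
  exact abs_heronApprox_sub_lt hm₀ (lt_of_pow_lt_pow_left₀ 3 hn₀ h₁)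
    (lt_of_pow_lt_pow_left₀ 3 (by positivity) h₂)
end
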